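/- arXiv:2312.04771 — 2 statements merged into one kernel-verified Lean document; each statement's English description precedes it below -/
import Mathlib

section
/- Let X be a two-sided quaternionic Banach space, T ∈ B(X), and let s ∈ ℍ satisfy |s| > limsup_{n→∞} ‖Tⁿ‖^{1/n}. Then the series Σ_{n=0}^{∞} Tⁿ s^{−n−1} converges absolutely in the operator norm of B(X), the quaternion s belongs to the S-resolvent set ρ_S(T), and S_L^{-1}(s,T) = Σ_{n=0}^{∞} Tⁿ s^{−n−1}. -/
open MulOpposite Filter

noncomputable section

local notation "ℍ" => Quaternion ℝ

variable {X : Type*} [NormedAddCommGroup X] [NormedSpace ℝ X] [CompleteSpace X]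
  [Module ℍ X] [Module ℍᵐᵒᵖ X]
  [IsScalarTower ℝ ℍ X] [IsScalarTower ℝ ℍᵐᵒᵖ X]
  [SMulCommClass ℝ ℍ X] [SMulCommClass ℝ ℍᵐᵒᵖ X]
  [SMulCommClass ℍ ℍᵐᵒᵖ X]
  [IsBoundedSMul ℍ X] [IsBoundedSMul ℍᵐᵒᵖ X]

/-- Left multiplication by a quaternion, as a bounded real-linear operator on `X`. -/
def lmulL (s : ℍ) : X →L[ℝ] X :=
  LinearMap.mkContinuous
    { toFun := fun v => s • v
      map_add' := fun u v => smul_add s u v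
      map_smul' := fun r v => (smul_comm r s v).symm }
    ‖s‖ (fun v => norm_smul_le s v)

/-- `T` is right `ℍ`-linear: `T (v q) = (T v) q`. -/
def RightLinear (T : X →L[ℝ] X) : Prop :=
  ∀ (q : ℍ) (v : X), T (op q • v) = op q • T v

/-- The operator `Q_s(T) = T² − 2 Re(s) T + |s|² I`. -/
def Qs (s : ℍ) (T : X →L[ℝ] X) : X →L[ℝ] X :=
  T * T - (2 * s.re) • T + (‖s‖ ^ 2 : ℝ) • (1 : X →L[ℝ] X)

/-- Invertibility in the algebra `B(X)` of bounded right `ℍ`-linear operators. -/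
def InvertibleInB (A : X →L[ℝ] X) : Prop :=
  ∃ B : X →L[ℝ] X, RightLinear B ∧ A * B = 1 ∧ B * A = 1

/-- The S-resolvent set of `T`. -/
def sResolventSet (T : X →L[ℝ] X) : Set ℍ :=
  {s : ℍ | InvertibleInB (Qs s T)}

/-- The S-spectrum of `T`. -/
def sSpectrum (T : X →L[ℝ] X) : Set ℍ :=
  {s : ℍ | ¬ InvertibleInB (Qs s T)}

/-- The left S-resolvent operator `S_L^{-1}(s,T) = Q_s(T)⁻¹ (conj(s) I − T)`. -/
def sResL (s : ℍ) (T : X →L[ℝ] X) : X →L[ℝ] X :=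
  Ring.inverse (Qs s T) * (lmulL (star s) - T)

/-- `T` is power-bounded: `sup_{n ≥ 1} ‖Tⁿ‖ < ∞`. -/
def PowerBounded (T : X →L[ℝ] X) : Prop :=
  ∃ C : ℝ, ∀ n : ℕ, 1 ≤ n → ‖T ^ n‖ ≤ C

/-- `p(T) = sup_{n ≥ 1} ‖Tⁿ‖`. -/
def pBound (T : X →L[ℝ] X) : ℝ :=
  ⨆ n : ℕ, ‖T ^ (n + 1)‖

/-!
`Q_s(T) = q(T)` for the real polynomial `q(t) = t² - 2 Re(s) t + |s|²`, whose complex roots have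
modulus `|s| > limsup ‖Tⁿ‖^{1/n}`. Hence the Taylor series
`q(t)⁻¹ = ∑ Uₙ(Re s / |s|) tⁿ / |s|ⁿ⁺²` (Chebyshev polynomials of the second kind, `|Uₙ| ≤ n + 1`
on `[-1, 1]`) converges at `t = T` and inverts `Q_s(T)`; the inverse is right linear because
`Q_s(T)` is. Since `s⁻¹` is a root of `1 - 2 Re(s) t + |s|² t²`, the coefficients `s^{-n-1}` obey
the same three-term recurrence as those of `q⁻¹`, so `Q_s(T) ∑ Tⁿ s^{-n-1}` telescopes to
`conj(s) I - T`.
-/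

open Polynomial Polynomial.Chebyshev

section NormedRing

variable {A : Type*}

theorem isBoundedUnder_norm_pow_rpow [SeminormedRing A] (T : A) :
    IsBoundedUnder (· ≤ ·) atTop fun n : ℕ => ‖T ^ n‖ ^ (1 / (n : ℝ)) := by
  refine isBoundedUnder_of ⟨max ‖T‖ 1, fun n => ?_⟩
  rcases Nat.eq_zero_or_pos n with rfl | hn
  · simp
  · calc ‖T ^ n‖ ^ (1 / (n : ℝ)) ≤ (‖T‖ ^ n) ^ (1 / (n : ℝ)) := by
          gcongr; exact norm_pow_le' T hn
      _ = ‖T‖ := by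
          rw [← Real.rpow_natCast, ← Real.rpow_mul (norm_nonneg T),
            mul_one_div_cancel (by positivity), Real.rpow_one]
      _ ≤ max ‖T‖ 1 := le_max_left _ _

theorem limsup_norm_pow_rpow_nonneg [SeminormedRing A] (T : A) :
    0 ≤ limsup (fun n : ℕ => ‖T ^ n‖ ^ (1 / (n : ℝ))) atTop :=
  le_limsup_of_frequently_le (.of_forall fun _ => by positivity) (isBoundedUnder_norm_pow_rpow T)

theorem eventually_norm_pow_le_pow_of_limsup_lt [SeminormedRing A] {T : A} {r : ℝ}
    (h : limsup (fun n : ℕ => ‖T ^ n‖ ^ (1 / (n : ℝ))) atTop < r) :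
    ∀ᶠ n : ℕ in atTop, ‖T ^ n‖ ≤ r ^ n := by
  filter_upwards [eventually_lt_of_limsup_lt h (isBoundedUnder_norm_pow_rpow T),
    eventually_ge_atTop 1] with n hn hn1
  calc ‖T ^ n‖ = (‖T ^ n‖ ^ (1 / (n : ℝ))) ^ n := by
        rw [← Real.rpow_natCast, ← Real.rpow_mul (norm_nonneg _),
          one_div_mul_cancel (by positivity), Real.rpow_one]
    _ ≤ r ^ n := by gcongr

theorem summable_succ_mul_norm_pow_div [SeminormedRing A] {T : A} {ρ : ℝ}
    (h : limsup (fun n : ℕ => ‖T ^ n‖ ^ (1 / (n : ℝ))) atTop < ρ) :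
    Summable fun n : ℕ => (n + 1) * ‖T ^ n‖ / ρ ^ n := by
  have hL := limsup_norm_pow_rpow_nonneg T
  set L := limsup (fun n : ℕ => ‖T ^ n‖ ^ (1 / (n : ℝ))) atTop
  have hρ : 0 < ρ := hL.trans_lt h
  set x := (L + ρ) / 2 / ρ
  have hx : ‖x‖ < 1 := by
    rw [Real.norm_of_nonneg (by positivity), div_lt_one hρ]; linarith
  have hgeom : Summable fun n : ℕ => (n + 1) * x ^ n := by
    simpa [add_mul] using (summable_pow_mul_geometric_of_norm_lt_one 1 hx).add
      (summable_geometric_of_norm_lt_one hx)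
  refine hgeom.of_norm_bounded_eventually ?_
  rw [Nat.cofinite_eq_atTop]
  filter_upwards [eventually_norm_pow_le_pow_of_limsup_lt (T := T) (r := (L + ρ) / 2)
    (by linarith)] with n hn
  rw [Real.norm_of_nonneg (by positivity), mul_div_assoc, div_pow]
  gcongr

theorem summable_norm_pow_add_mul [SeminormedRing A] {T : A} {C : ℕ → A}
    (h : Summable fun n => ‖T ^ n‖ * ‖C n‖) (j : ℕ) :
    Summable fun n => ‖T ^ (n + j) * C n‖ := by
  refine (h.mul_left ‖T ^ j‖).of_nonneg_of_le (fun _ => norm_nonneg _) fun n => ?_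
  calc ‖T ^ (n + j) * C n‖ ≤ ‖T ^ n‖ * ‖T ^ j‖ * ‖C n‖ := by
        rw [pow_add]; exact (norm_mul_le _ _).trans (by gcongr; exact norm_mul_le _ _)
    _ = ‖T ^ j‖ * (‖T ^ n‖ * ‖C n‖) := by ring

theorem quadratic_mul_tsum_pow_mul [NormedRing A] [NormedAlgebra ℝ A] [CompleteSpace A]
    {T : A} {C : ℕ → A} (a q : ℝ) (h : Summable fun n => ‖T ^ n‖ * ‖C n‖)
    (hC : ∀ n, C n - (2 * a) • C (n + 1) + q • C (n + 2) = 0) :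
    (T * T - (2 * a) • T + q • 1) * ∑' n, T ^ n * C n =
      q • C 0 + T * (q • C 1 - (2 * a) • C 0) := by
  have hs (j : ℕ) := (summable_norm_pow_add_mul h j).of_norm
  have hs₀ : Summable fun n => T ^ n * C n := by simpa using hs 0
  have hs₁ : Summable fun n => T ^ (n + 2) * C (n + 1) := by
    simpa [add_assoc] using (summable_nat_add_iff 1).mpr (hs 1)
  have hs₂ : Summable fun n => T ^ (n + 2) * C (n + 2) := (summable_nat_add_iff 2).mpr hs₀
  have e₂ : T * T * ∑' n, T ^ n * C n = ∑' n, T ^ (n + 2) * C n := by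
    rw [← hs₀.tsum_mul_left]; simp only [← mul_assoc, ← sq, ← pow_add, add_comm 2]
  have e₁ : T * ∑' n, T ^ n * C n = T * C 0 + ∑' n, T ^ (n + 2) * C (n + 1) := by
    rw [← hs₀.tsum_mul_left]
    simp only [← mul_assoc, ← pow_succ']
    rw [(hs 1).tsum_eq_zero_add]
    simp only [zero_add, pow_one]
  have e₀ : ∑' n, T ^ n * C n = C 0 + T * C 1 + ∑' n, T ^ (n + 2) * C (n + 2) := by
    rw [← hs₀.sum_add_tsum_nat_add 2]; simp [Finset.sum_range_succ]
  have htail : ∑' n, T ^ (n + 2) * C n - (2 * a) • ∑' n, T ^ (n + 2) * C (n + 1)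
      + q • ∑' n, T ^ (n + 2) * C (n + 2) = 0 := by
    rw [← tsum_const_smul'', ← tsum_const_smul'', ← (hs 2).tsum_sub (hs₁.const_smul _),
      ← ((hs 2).sub (hs₁.const_smul _)).tsum_add (hs₂.const_smul _)]
    simp only [← mul_smul_comm, ← mul_sub, ← mul_add, hC, mul_zero, tsum_zero]
  rw [add_mul, sub_mul, smul_mul_assoc, smul_mul_assoc, one_mul, e₂, e₁, e₀, mul_sub,
    mul_smul_comm, mul_smul_comm]
  linear_combination (norm := module) htail

end NormedRing

theorem Polynomial.Chebyshev.abs_eval_U_real_le (n : ℕ) {x : ℝ} (hx : |x| ≤ 1) :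
    |(U ℝ n).eval x| ≤ n + 1 := by
  induction n with
  | zero => simp
  | succ n ih =>
    have hT := abs_eval_T_real_le_one ((n : ℤ) + 1) hx
    rw [Nat.cast_succ, U_eq_X_mul_U_add_T, eval_add, eval_mul, eval_X, Nat.cast_succ]
    calc |x * (U ℝ n).eval x + (T ℝ (n + 1)).eval x|
        ≤ |x| * |(U ℝ n).eval x| + 1 := (abs_add_le _ _).trans (by rw [abs_mul]; gcongr)
      _ ≤ 1 * (n + 1) + 1 := by gcongr
      _ = n + 1 + 1 := by ring

/-- The Taylor coefficients of `(ρ² - 2 a t + t²)⁻¹` at `t = 0`. -/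
def invQuadCoeff (a ρ : ℝ) (n : ℕ) : ℝ :=
  (U ℝ n).eval (a / ρ) / ρ ^ (n + 2)

section invQuadCoeff

variable {a ρ : ℝ}

theorem invQuadCoeff_recurrence (hρ : ρ ≠ 0) (n : ℕ) :
    invQuadCoeff a ρ n - 2 * a * invQuadCoeff a ρ (n + 1) +
      ρ ^ 2 * invQuadCoeff a ρ (n + 2) = 0 := by
  have hU := U_add_two ℝ n
  simp only [invQuadCoeff, Nat.cast_add, Nat.cast_one, Nat.cast_ofNat, hU, eval_sub, eval_mul,
    eval_X, eval_ofNat]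
  field_simp
  ring

theorem sq_mul_invQuadCoeff_zero (hρ : ρ ≠ 0) : ρ ^ 2 * invQuadCoeff a ρ 0 = 1 := by
  simp [invQuadCoeff, hρ]

theorem sq_mul_invQuadCoeff_one_sub (hρ : ρ ≠ 0) :
    ρ ^ 2 * invQuadCoeff a ρ 1 - 2 * a * invQuadCoeff a ρ 0 = 0 := by
  simp only [invQuadCoeff, Nat.cast_one, U_one, U_zero, eval_mul, eval_ofNat, eval_X, eval_one,
    CharP.cast_eq_zero]
  field_simp
  ring

theorem abs_invQuadCoeff_le (hρ : 0 < ρ) (ha : |a| ≤ ρ) (n : ℕ) :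
    |invQuadCoeff a ρ n| ≤ (n + 1) / ρ ^ (n + 2) := by
  rw [invQuadCoeff, abs_div, abs_of_pos (pow_pos hρ _)]
  gcongr
  exact abs_eval_U_real_le n (by rwa [abs_div, abs_of_pos hρ, div_le_one hρ])

end invQuadCoeff

section invQuadSeries

variable {A : Type*} [NormedRing A] [NormedAlgebra ℝ A] {T : A} {a ρ : ℝ}

def invQuadSeries (T : A) (a ρ : ℝ) : A :=
  ∑' n, T ^ n * algebraMap ℝ A (invQuadCoeff a ρ n)

theorem summable_norm_pow_mul_invQuadCoeff (hρ : 0 < ρ) (ha : |a| ≤ ρ)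
    (h : Summable fun n : ℕ => (n + 1) * ‖T ^ n‖ / ρ ^ n) :
    Summable fun n => ‖T ^ n‖ * ‖algebraMap ℝ A (invQuadCoeff a ρ n)‖ := by
  refine (h.mul_left (‖(1 : A)‖ / ρ ^ 2)).of_nonneg_of_le (fun _ => by positivity) fun n => ?_
  rw [norm_algebraMap, Real.norm_eq_abs]
  calc ‖T ^ n‖ * (|invQuadCoeff a ρ n| * ‖(1 : A)‖)
      ≤ ‖T ^ n‖ * ((n + 1) / ρ ^ (n + 2) * ‖(1 : A)‖) := by
        gcongr; exact abs_invQuadCoeff_le hρ ha n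
    _ = ‖(1 : A)‖ / ρ ^ 2 * ((n + 1) * ‖T ^ n‖ / ρ ^ n) := by
        rw [pow_add]; field_simp

variable [CompleteSpace A]

theorem quadratic_mul_invQuadSeries (hρ : 0 < ρ) (ha : |a| ≤ ρ)
    (h : Summable fun n : ℕ => (n + 1) * ‖T ^ n‖ / ρ ^ n) :
    (T * T - (2 * a) • T + ρ ^ 2 • 1) * invQuadSeries T a ρ = 1 := by
  rw [invQuadSeries, quadratic_mul_tsum_pow_mul a (ρ ^ 2)
    (summable_norm_pow_mul_invQuadCoeff hρ ha h) fun n => ?_]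
  · simp only [Algebra.smul_def, ← map_mul, ← map_sub, sq_mul_invQuadCoeff_zero hρ.ne',
      sq_mul_invQuadCoeff_one_sub hρ.ne', map_one, map_zero, mul_zero, add_zero]
  · simp only [Algebra.smul_def, ← map_mul, ← map_sub, ← map_add,
      invQuadCoeff_recurrence hρ.ne', map_zero]

theorem invQuadSeries_mul_quadratic (hρ : 0 < ρ) (ha : |a| ≤ ρ)
    (h : Summable fun n : ℕ => (n + 1) * ‖T ^ n‖ / ρ ^ n) :
    invQuadSeries T a ρ * (T * T - (2 * a) • T + ρ ^ 2 • 1) = 1 := by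
  have hT : Commute T (T * T - (2 * a) • T + ρ ^ 2 • 1) :=
    (((Commute.refl T).mul_right (.refl T)).sub_right ((Commute.refl T).smul_right _)).add_right
      ((Commute.one_right T).smul_right _)
  rw [invQuadSeries, (Commute.tsum_left _ fun n =>
    (hT.pow_left n).mul_left (Algebra.commute_algebraMap_left _ _)).eq]
  exact quadratic_mul_invQuadSeries hρ ha h

end invQuadSeries

theorem zpow_neg_natCast_sub_one {G : Type*} [DivisionMonoid G] (s : G) (n : ℕ) :
    s ^ (-(n : ℤ) - 1) = s⁻¹ ^ (n + 1) := by
  rw [show -(n : ℤ) - 1 = -((n + 1 : ℕ) : ℤ) by push_cast; ring, zpow_neg, zpow_natCast, inv_pow]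

namespace Quaternion

theorem abs_re_le_norm (s : Quaternion ℝ) : |s.re| ≤ ‖s‖ := by
  simpa [inner_def] using abs_real_inner_le_norm s 1

theorem sq_norm_smul_inv (s : Quaternion ℝ) : ‖s‖ ^ 2 • s⁻¹ = star s := by
  rcases eq_or_ne s 0 with rfl | hs
  · simp
  rw [← coe_mul_eq_smul, sq, ← normSq_eq_norm_mul_self, ← star_mul_self, mul_assoc,
    mul_inv_cancel₀ hs, mul_one]

theorem sq_norm_smul_inv_sq_sub {s : Quaternion ℝ} (hs : s ≠ 0) :
    ‖s‖ ^ 2 • s⁻¹ ^ 2 - (2 * s.re) • s⁻¹ = -1 := by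
  rw [sq s⁻¹, ← smul_mul_assoc, sq_norm_smul_inv, ← coe_mul_eq_smul, ← self_add_star', add_mul,
    mul_inv_cancel₀ hs]
  abel

theorem inv_pow_recurrence {s : Quaternion ℝ} (hs : s ≠ 0) (n : ℕ) :
    s⁻¹ ^ (n + 1) - (2 * s.re) • s⁻¹ ^ (n + 2) + ‖s‖ ^ 2 • s⁻¹ ^ (n + 3) = 0 := by
  have h := congrArg (s⁻¹ ^ (n + 1) * ·) (sq_norm_smul_inv_sq_sub hs)
  simp only [mul_sub, mul_smul_comm, ← pow_add, ← pow_succ, mul_neg, mul_one] at h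
  linear_combination (norm := module) h

end Quaternion

section RightLinear

variable {E : Type*} [NormedAddCommGroup E] [NormedSpace ℝ E] [Module ℍᵐᵒᵖ E]

theorem RightLinear.qs [SMulCommClass ℝ ℍᵐᵒᵖ E] {T : E →L[ℝ] E} (hT : RightLinear T) (s : ℍ) :
    RightLinear (Qs s T) := fun q v => by
  simp only [Qs, add_apply, sub_apply, mul_apply_eq_comp, smul_apply, one_apply_eq_self, hT q,
    smul_add, smul_sub, smul_comm _ (op q)]

theorem RightLinear.of_mul_eq_one {A B : E →L[ℝ] E} (hA : RightLinear A) (hAB : A * B = 1)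
    (hBA : B * A = 1) : RightLinear B := fun q v => by
  calc B (op q • v) = B (op q • A (B v)) := by rw [← mul_apply_eq_comp, hAB, one_apply_eq_self]
    _ = op q • B v := by rw [← hA, ← mul_apply_eq_comp, hBA, one_apply_eq_self]

end RightLinear

section LeftMultiplication

variable {E : Type*} [NormedAddCommGroup E] [NormedSpace ℝ E] [Module ℍ E] [SMulCommClass ℝ ℍ E]
  [IsBoundedSMul ℍ E]

theorem norm_lmulL_le (q : ℍ) : ‖(lmulL q : E →L[ℝ] E)‖ ≤ ‖q‖ :=
  LinearMap.mkContinuous_norm_le _ (norm_nonneg q) _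

theorem summable_norm_pow_mul_lmulL_inv_pow {T : E →L[ℝ] E} {s : ℍ}
    (h : Summable fun n : ℕ => (n + 1) * ‖T ^ n‖ / ‖s‖ ^ n) :
    Summable fun n => ‖T ^ n‖ * ‖(lmulL (s⁻¹ ^ (n + 1)) : E →L[ℝ] E)‖ := by
  refine (h.mul_left ‖s‖⁻¹).of_nonneg_of_le (fun _ => by positivity) fun n => ?_
  calc ‖T ^ n‖ * ‖(lmulL (s⁻¹ ^ (n + 1)) : E →L[ℝ] E)‖ ≤ ‖T ^ n‖ * (‖s‖⁻¹ * (‖s‖ ^ n)⁻¹) := by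
        gcongr
        exact (norm_lmulL_le _).trans_eq (by rw [norm_pow, norm_inv, pow_succ', inv_pow])
    _ ≤ ‖T ^ n‖ * (‖s‖⁻¹ * ((n + 1) / ‖s‖ ^ n)) := by
        gcongr; rw [inv_eq_one_div]; gcongr; linarith
    _ = ‖s‖⁻¹ * ((n + 1) * ‖T ^ n‖ / ‖s‖ ^ n) := by ring

variable [IsScalarTower ℝ ℍ E]

def lmulAlgHom : ℍ →ₐ[ℝ] (E →L[ℝ] E) where
  toFun := lmulL
  map_one' := ContinuousLinearMap.ext fun v => one_smul ℍ v
  map_mul' p q := ContinuousLinearMap.ext fun v => mul_smul p q v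
  map_zero' := ContinuousLinearMap.ext fun v => zero_smul ℍ v
  map_add' p q := ContinuousLinearMap.ext fun v => add_smul p q v
  commutes' r := ContinuousLinearMap.ext fun v => algebraMap_smul ℍ r v

theorem lmulAlgHom_apply (q : ℍ) : (lmulAlgHom q : E →L[ℝ] E) = lmulL q := rfl

theorem Qs_mul_tsum_lmulL_inv_pow [CompleteSpace E] {T : E →L[ℝ] E} {s : ℍ} (hs : s ≠ 0)
    (h : Summable fun n : ℕ => (n + 1) * ‖T ^ n‖ / ‖s‖ ^ n) :
    Qs s T * ∑' n : ℕ, T ^ n * lmulL (s⁻¹ ^ (n + 1)) = lmulL (star s) - T := by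
  rw [Qs, quadratic_mul_tsum_pow_mul s.re (‖s‖ ^ 2) (summable_norm_pow_mul_lmulL_inv_pow h)
    fun n => ?_]
  · simp only [← lmulAlgHom_apply, ← map_smul, ← map_sub, zero_add, pow_one, Nat.reduceAdd,
      Quaternion.sq_norm_smul_inv, Quaternion.sq_norm_smul_inv_sq_sub hs, map_neg, map_one,
      mul_neg, mul_one, ← sub_eq_add_neg]
  · simp only [← lmulAlgHom_apply, ← map_smul, ← map_sub, ← map_add,
      Quaternion.inv_pow_recurrence hs, map_zero]

end LeftMultiplication

/-- If `|s| > limsup ‖Tⁿ‖^{1/n}`, then the series `Σ Tⁿ s^{−n−1}` converges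
absolutely in operator norm, `s ∈ ρ_S(T)`, and `S_L^{-1}(s,T) = Σ_{n=0}^∞ Tⁿ s^{−n−1}`. -/
theorem sResL_eq_tsum (T : X →L[ℝ] X) (hT : RightLinear T) (s : ℍ)
    (hs : limsup (fun n : ℕ => ‖T ^ n‖ ^ (1 / (n : ℝ))) atTop < ‖s‖) :
    Summable (fun n : ℕ => ‖T ^ n * lmulL (s ^ (-(n : ℤ) - 1))‖) ∧
    s ∈ sResolventSet T ∧
    sResL s T = ∑' n : ℕ, T ^ n * lmulL (s ^ (-(n : ℤ) - 1)) := by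
  have hρ : 0 < ‖s‖ := (limsup_norm_pow_rpow_nonneg T).trans_lt hs
  have hpow := summable_succ_mul_norm_pow_div hs
  have hQB : Qs s T * invQuadSeries T s.re ‖s‖ = 1 :=
    quadratic_mul_invQuadSeries hρ (Quaternion.abs_re_le_norm s) hpow
  have hBQ : invQuadSeries T s.re ‖s‖ * Qs s T = 1 :=
    invQuadSeries_mul_quadratic hρ (Quaternion.abs_re_le_norm s) hpow
  simp only [zpow_neg_natCast_sub_one]
  refine ⟨by simpa using summable_norm_pow_add_mul (summable_norm_pow_mul_lmulL_inv_pow hpow) 0,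
    ⟨_, (hT.qs s).of_mul_eq_one hQB hBQ, hQB, hBQ⟩, ?_⟩
  exact (Ring.inverse_mul_eq_iff_eq_mul _ _ _ ⟨⟨_, _, hQB, hBQ⟩, rfl⟩).mpr
    (Qs_mul_tsum_lmulL_inv_pow (norm_pos_iff.mp hρ) hpow).symm
end
end

section
/- Let X be a two-sided quaternionic Banach space, T ∈ B(X) and s ∈ ρ_S(T). Then the left spherical Yosida approximation satisfies Y_L(s,T) = T S_L^{-1}(s,T) s, i.e. S_L^{-1}(s,T)s² − sI = T ∘ (S_L^{-1}(s,T) s), where for A ∈ B(X) and q ∈ ℍ the operators Aq and qA are defined by (Aq)(v) = A(qv) and (qA)(v) = q(A(v)). -/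
open MulOpposite Filter

noncomputable section

local notation "ℍ" => Quaternion ℝ

variable {X : Type*} [NormedAddCommGroup X] [NormedSpace ℝ X] [CompleteSpace X]
  [Module ℍ X] [Module ℍᵐᵒᵖ X]
  [IsScalarTower ℝ ℍ X] [IsScalarTower ℝ ℍᵐᵒᵖ X]
  [SMulCommClass ℝ ℍ X] [SMulCommClass ℝ ℍᵐᵒᵖ X]
  [SMulCommClass ℍ ℍᵐᵒᵖ X]
  [IsBoundedSMul ℍ X] [IsBoundedSMul ℍᵐᵒᵖ X]

/-! Since `T` commutes with `Q_s(T)`, it commutes with `Q_s(T)⁻¹`. Together with the identity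
`(s̄ - T) s - T (s̄ - T) = Q_s(T)` this gives the S-resolvent equation
`S_L⁻¹(s,T) s - T S_L⁻¹(s,T) = I`; multiplying it on the right by `s` gives the claim. -/

theorem Commute.ringInverse_right {M₀ : Type*} [MonoidWithZero M₀] {a b : M₀}
    (h : Commute a b) : Commute a (Ring.inverse b) := by
  by_cases hb : IsUnit b
  · obtain ⟨u, rfl⟩ := hb
    rw [Ring.inverse_unit]
    exact h.units_inv_right
  · rw [Ring.inverse_non_unit b hb]
    exact Commute.zero_right a

section QuaternionicOperators

variable {E : Type*} [NormedAddCommGroup E] [NormedSpace ℝ E]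

theorem InvertibleInB.isUnit [Module ℍᵐᵒᵖ E] {A : E →L[ℝ] E} (hA : InvertibleInB A) :
    IsUnit A :=
  let ⟨B, _, hAB, hBA⟩ := hA
  ⟨⟨A, B, hAB, hBA⟩, rfl⟩

theorem commute_Qs (s : ℍ) (T : E →L[ℝ] E) : Commute T (Qs s T) :=
  (((Commute.refl T).mul_right (Commute.refl T)).sub_right
    ((Commute.refl T).smul_right _)).add_right ((Commute.one_right T).smul_right _)

variable [Module ℍ E] [SMulCommClass ℝ ℍ E] [IsBoundedSMul ℍ E]

theorem lmulL_mul (a b : ℍ) : (lmulL (a * b) : E →L[ℝ] E) = lmulL a * lmulL b := by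
  ext v
  exact mul_smul a b v

theorem lmulL_add (a b : ℍ) : (lmulL (a + b) : E →L[ℝ] E) = lmulL a + lmulL b := by
  ext v
  exact add_smul a b v

variable [IsScalarTower ℝ ℍ E]

theorem lmulL_coe (r : ℝ) : (lmulL (r : ℍ) : E →L[ℝ] E) = r • 1 := by
  ext v
  exact algebraMap_smul ℍ r v

theorem lmulL_add_lmulL_star (s : ℍ) :
    (lmulL s + lmulL (star s) : E →L[ℝ] E) = (2 * s.re) • 1 := by
  rw [← lmulL_add, Quaternion.self_add_star, ← lmulL_coe]
  push_cast
  rfl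

theorem lmulL_star_mul_lmulL (s : ℍ) :
    (lmulL (star s) * lmulL s : E →L[ℝ] E) = (‖s‖ ^ 2) • 1 := by
  rw [← lmulL_mul, Quaternion.star_mul_self, Quaternion.normSq_eq_norm_mul_self, ← sq,
    lmulL_coe]

theorem Qs_eq_sub_mul_lmulL_sub_mul_sub (s : ℍ) (T : E →L[ℝ] E) :
    Qs s T = (lmulL (star s) - T) * lmulL s - T * (lmulL (star s) - T) := by
  have hexpand : (lmulL (star s) - T) * lmulL s - T * (lmulL (star s) - T)
      = lmulL (star s) * lmulL s - T * (lmulL s + lmulL (star s)) + T * T := by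
    simp only [sub_mul, mul_sub, mul_add]
    abel
  rw [hexpand, lmulL_star_mul_lmulL, lmulL_add_lmulL_star, mul_smul_comm, mul_one, Qs]
  abel

theorem sResL_mul_lmulL_sub_mul_sResL {s : ℍ} {T : E →L[ℝ] E} (hs : IsUnit (Qs s T)) :
    sResL s T * lmulL s - T * sResL s T = 1 := by
  have hcomm : T * Ring.inverse (Qs s T) = Ring.inverse (Qs s T) * T :=
    (commute_Qs s T).ringInverse_right
  rw [sResL, ← mul_assoc T, hcomm, mul_assoc, mul_assoc, ← mul_sub,
    ← Qs_eq_sub_mul_lmulL_sub_mul_sub, Ring.inverse_mul_cancel _ hs]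

end QuaternionicOperators

theorem yosida_eq_general (T : X →L[ℝ] X) (s : ℍ)
    (hs : s ∈ sResolventSet T) :
    sResL s T * lmulL (s ^ 2) - lmulL s = T * (sResL s T * lmulL s) := by
  have hres : T * sResL s T = sResL s T * lmulL s - 1 := by
    rw [← sResL_mul_lmulL_sub_mul_sResL hs.isUnit, sub_sub_cancel]
  rw [← mul_assoc, hres, sub_mul, one_mul, mul_assoc, ← lmulL_mul, ← sq]

/-- For `s ∈ ρ_S(T)` the left spherical Yosida approximation satisfies
`Y_L(s,T) = S_L^{-1}(s,T) s² − s I = T (S_L^{-1}(s,T) s)`. -/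
theorem yosida_eq (T : X →L[ℝ] X) (hT : RightLinear T) (s : ℍ)
    (hs : s ∈ sResolventSet T) :
    sResL s T * lmulL (s ^ 2) - lmulL s = T * (sResL s T * lmulL s) :=
  yosida_eq_general T s hs
end
end
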